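/- For every k > 0 and every y ≥ 0, the speckle reparameterized data-fit γ_{k,y} is differentiable at every point of ℝ and its derivative is Lipschitz continuous on ℝ with constant max(y·k, 1). -/

import Mathlib

/-!
Both pieces of `γ_{k,y}` and their derivatives agree at `0` (value `y k - log k`, slope
`y k - 1`), so `γ_{k,y}` is differentiable. Its derivative has derivative `y k eᶿ ∈ [0, y k]` on
`θ ≤ 0` and `(1 + θ)⁻² ∈ (0, 1]` on `θ ≥ 0`, so by the mean value theorem it is
`max (y k) 1`-Lipschitz on each half-line, hence on `ℝ` by the triangle inequality through `0`.
-/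

open Real Set

section Piecewise

variable {E : Type*} {f g : ℝ → E} {a : ℝ}

theorem eqOn_ite_le_Iic : EqOn (fun x => if x ≤ a then f x else g x) f (Iic a) :=
  fun _ hx => if_pos hx

theorem eqOn_ite_le_Ici (h : f a = g a) :
    EqOn (fun x => if x ≤ a then f x else g x) g (Ici a) := by
  intro x hx
  rcases (mem_Ici.mp hx).eq_or_lt with rfl | hax
  · simp [h]
  · exact if_neg (not_le.mpr hax)

theorem LipschitzWith.of_Iic_of_Ici [PseudoMetricSpace E] {K : NNReal}
    (hle : LipschitzOnWith K f (Iic a)) (hge : LipschitzOnWith K f (Ici a)) :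
    LipschitzWith K f := by
  refine LipschitzWith.of_dist_le_mul fun x y => ?_
  wlog hxy : x ≤ y generalizing x y
  · simpa only [dist_comm] using this y x (le_of_not_ge hxy)
  rcases le_total y a with hya | hay
  · exact hle.dist_le_mul x (hxy.trans hya) y hya
  rcases le_total a x with hax | hxa
  · exact hge.dist_le_mul x hax y hay
  have hsplit : dist x a + dist a y = dist x y :=
    dist_add_dist_of_mem_segment (Icc_subset_segment ⟨hxa, hay⟩)
  calc dist (f x) (f y) ≤ dist (f x) (f a) + dist (f a) (f y) := dist_triangle _ _ _
    _ ≤ K * dist x a + K * dist a y :=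
        add_le_add (hle.dist_le_mul x hxa a self_mem_Iic) (hge.dist_le_mul a self_mem_Ici y hay)
    _ = K * dist x y := by rw [← mul_add, hsplit]

theorem hasDerivAt_ite_le [NormedAddCommGroup E] [NormedSpace ℝ E] {f' g' : ℝ → E} {x : ℝ}
    (hf : ∀ x ≤ a, HasDerivAt f (f' x) x) (hg : ∀ x ≥ a, HasDerivAt g (g' x) x)
    (h : f a = g a) (h' : f' a = g' a) :
    HasDerivAt (fun x => if x ≤ a then f x else g x) (if x ≤ a then f' x else g' x) x := by
  rcases lt_trichotomy x a with hxa | rfl | hax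
  · rw [if_pos hxa.le]
    refine (hf x hxa.le).congr_of_eventuallyEq ?_
    filter_upwards [Iio_mem_nhds hxa] with z hz using eqOn_ite_le_Iic (mem_Iic.2 hz.le)
  · have hleft := (hf x le_rfl).hasDerivWithinAt.congr_of_mem (eqOn_ite_le_Iic (g := g))
      self_mem_Iic
    have hright := (hg x le_rfl).hasDerivWithinAt.congr_of_mem (eqOn_ite_le_Ici h) self_mem_Ici
    rw [← h'] at hright
    simpa [Iic_union_Ici, hasDerivWithinAt_univ] using hleft.union hright
  · rw [if_neg (not_le.mpr hax)]
    refine (hg x hax.le).congr_of_eventuallyEq ?_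
    filter_upwards [Ioi_mem_nhds hax] with z hz using eqOn_ite_le_Ici h (mem_Ici.2 hz.le)

end Piecewise

/-- `γ_{k,y} = speckleDataFit (y * k) (log k)`. -/
noncomputable def speckleDataFit (c d θ : ℝ) : ℝ :=
  if θ ≤ 0 then c * exp θ - θ - d else c * (1 + θ) - log (1 + θ) - d

noncomputable def speckleDataFitDeriv (c θ : ℝ) : ℝ :=
  if θ ≤ 0 then c * exp θ - 1 else c - (1 + θ)⁻¹

theorem hasDerivAt_speckleDataFit (c d θ : ℝ) :
    HasDerivAt (speckleDataFit c d) (speckleDataFitDeriv c θ) θ := by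
  have hexp (x : ℝ) : HasDerivAt (fun θ => c * exp θ - θ - d) (c * exp x - 1) x :=
    (((hasDerivAt_exp x).const_mul c).sub (hasDerivAt_id x)).sub_const d
  have hlog (x : ℝ) (hx : 0 ≤ x) :
      HasDerivAt (fun θ => c * (1 + θ) - log (1 + θ) - d) (c - (1 + x)⁻¹) x := by
    have hlin : HasDerivAt (fun θ => 1 + θ) 1 x := (hasDerivAt_id x).const_add 1
    simpa using ((hlin.const_mul c).sub (hlin.log (by linarith))).sub_const d
  exact hasDerivAt_ite_le (fun x _ => hexp x) hlog (by simp) (by simp)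

theorem lipschitzWith_speckleDataFitDeriv {c : ℝ} (hc : 0 ≤ c) :
    LipschitzWith (max c 1).toNNReal (speckleDataFitDeriv c) := by
  have hmax : 0 ≤ max c 1 := le_max_of_le_right zero_le_one
  unfold speckleDataFitDeriv
  refine LipschitzWith.of_Iic_of_Ici (a := 0) ?_ ?_
  · refine (convex_Iic 0).lipschitzOnWith_of_nnnorm_hasDerivWithin_le (fun x hx =>
      (((hasDerivAt_exp x).const_mul c).sub_const 1).hasDerivWithinAt.congr_of_mem
        eqOn_ite_le_Iic hx) fun x hx => ?_
    rw [← NNReal.coe_le_coe, coe_nnnorm, Real.coe_toNNReal _ hmax,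
      Real.norm_of_nonneg (by positivity)]
    exact (mul_le_of_le_one_right hc (exp_le_one_iff.2 hx)).trans (le_max_left _ _)
  · have hderiv (x : ℝ) (hx : x ∈ Ici 0) :
        HasDerivAt (fun θ => c - (1 + θ)⁻¹) ((1 + x) ^ 2)⁻¹ x := by
      have hlin : HasDerivAt (fun θ => 1 + θ) 1 x := (hasDerivAt_id x).const_add 1
      simpa [neg_div] using (hlin.inv (by linarith [mem_Ici.1 hx])).const_sub c
    refine (convex_Ici 0).lipschitzOnWith_of_nnnorm_hasDerivWithin_le (fun x hx =>
      (hderiv x hx).hasDerivWithinAt.congr_of_mem (eqOn_ite_le_Ici (by simp)) hx) fun x hx => ?_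
    rw [← NNReal.coe_le_coe, coe_nnnorm, Real.coe_toNNReal _ hmax,
      Real.norm_of_nonneg (by positivity)]
    exact (inv_le_one_of_one_le₀ (one_le_pow₀ (by linarith [mem_Ici.1 hx]))).trans
      (le_max_right _ _)

/-- **Speckle reparameterized data-fit has a Lipschitz gradient.**
For every k > 0 and every y ≥ 0, γ_{k,y} is differentiable at every point of ℝ
and its derivative is Lipschitz continuous on ℝ with constant max(y·k, 1). -/
theorem speckle_reparam_datafit_lipschitz_grad
    (k : ℝ) (hk : 0 < k) (y : ℝ) (hy : 0 ≤ y) :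
    Differentiable ℝ (fun θ : ℝ =>
      if θ ≤ 0 then y * k * Real.exp θ - θ - Real.log k
      else y * k * (1 + θ) - Real.log (1 + θ) - Real.log k) ∧
    ∀ a b : ℝ,
      |deriv (fun θ : ℝ =>
        if θ ≤ 0 then y * k * Real.exp θ - θ - Real.log k
        else y * k * (1 + θ) - Real.log (1 + θ) - Real.log k) a
       - deriv (fun θ : ℝ =>
        if θ ≤ 0 then y * k * Real.exp θ - θ - Real.log k
        else y * k * (1 + θ) - Real.log (1 + θ) - Real.log k) b|
      ≤ max (y * k) 1 * |a - b| := by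
  have hderiv := hasDerivAt_speckleDataFit (y * k) (log k)
  unfold speckleDataFit at hderiv
  refine ⟨fun θ => (hderiv θ).differentiableAt, fun a b => ?_⟩
  have hlip := (lipschitzWith_speckleDataFitDeriv (mul_nonneg hy hk.le)).dist_le_mul a b
  rw [(hderiv a).deriv, (hderiv b).deriv]
  simpa only [Real.coe_toNNReal _ (le_max_of_le_right zero_le_one), Real.dist_eq] using hlip
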